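/- arXiv:2506.09232 — 4 statements merged into one kernel-verified Lean document; each statement's English description precedes it below -/
import Mathlib

section
/- With the grading of g by wght(Y) = 1, wght(H) = wght(E) = 0, wght(X) = −1, wght(ε_i) = −i, wght(η) = 5−2n, the following hold: (1) distinct graded components of g are orthogonal for (·,·), i.e., (g_p, g_q) = 0 for p ≠ q; (2) τ maps the weight-p part of span{Y, H, E} into the weight −p part of g for every p ≥ 0; (3) ([A, x], y) = (x, [τ(A), y]) for all x, y ∈ g and all A ∈ span{Y, H, E}. -/
noncomputable section

open scoped BigOperators

/-- The underlying vector space of `gl₂(ℝ)`, with basis `Y, H, E, X` at indices `0,1,2,3`. -/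
abbrev G2 : Type := Fin 4 → ℝ

/-- The underlying vector space of the Heisenberg algebra `heis_{2n-5}`:
coefficients of `ε_1, …, ε_{2n-6}` together with the coefficient of `η`. -/
abbrev Hs (n : ℕ) : Type := (Fin (2*n-6) → ℝ) × ℝ

/-- The underlying vector space of `g = gl₂(ℝ) ⋉ heis_{2n-5}`. -/
abbrev Gg (n : ℕ) : Type := G2 × Hs n

/-- The basis vector `ε_p` (1-based index `p`). -/
def epsV (n : ℕ) (p : ℕ) : Hs n := (fun i => if i.val + 1 = p then 1 else 0, 0)

/-- The central basis vector `η`. -/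
def etaV (n : ℕ) : Hs n := (0, 1)

/-- The Heisenberg bracket, encoding `[ε_i, ε_{2n-5-i}] = (-1)^i η`. -/
def heisBr (n : ℕ) (x y : Hs n) : Hs n :=
  (0, ∑ i : Fin (2*n-6), (-1 : ℝ)^(i.val+1) * x.1 i * y.1 i.rev)

/-- The `gl₂(ℝ)` bracket: `[X,Y]=H`, `[H,X]=2X`, `[H,Y]=-2Y`, and `E` is central. -/
def gl2Br (a b : G2) : G2 :=
  ![-2*(a 1 * b 0 - a 0 * b 1), a 3 * b 0 - a 0 * b 3, 0, 2*(a 1 * b 3 - a 3 * b 1)]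

/-- The map `φ : gl₂(ℝ) → End(heis_{2n-5})` from the paper. -/
def phi (n : ℕ) (a : G2) (v : Hs n) : Hs n :=
  (fun i =>
      a 1 * (2*(i.val:ℝ) + 7 - 2*(n:ℝ)) * v.1 i
    + a 2 * v.1 i
    + a 3 * (if h : 0 < i.val then v.1 ⟨i.val - 1, by have := i.isLt; omega⟩ else 0)
    + a 0 * (((i.val:ℝ)+1) * (2*(n:ℝ) - 7 - (i.val:ℝ))) *
        (if h : i.val + 1 < 2*n-6 then v.1 ⟨i.val+1, h⟩ else 0),
   2 * a 2 * v.2)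

/-- The bracket of the semidirect product `g = gl₂(ℝ) ⋉_φ heis_{2n-5}`. -/
def gBr (n : ℕ) (x y : Gg n) : Gg n :=
  (gl2Br x.1 y.1, phi n x.1 y.2 - phi n y.1 x.2 + heisBr n x.2 y.2)

def bY (n : ℕ) : Gg n := (![1,0,0,0], 0)
def bH (n : ℕ) : Gg n := (![0,1,0,0], 0)
def bE (n : ℕ) : Gg n := (![0,0,1,0], 0)
def bX (n : ℕ) : Gg n := (![0,0,0,1], 0)
def bEps (n : ℕ) (p : ℕ) : Gg n := (0, epsV n p)
def bEta (n : ℕ) : Gg n := (0, etaV n)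

/-- The weight-`w` graded component of `g` in the grading of `s^{k,n}`: the span of the
basis elements of weight `w`, where `wght Y = 1`, `wght H = wght E = 0`, `wght X = -1`,
`wght ε_p = n-4-k-p`, `wght η = -3-2k`. -/
def gComp (n k : ℕ) (w : ℤ) : Submodule ℝ (Gg n) :=
  Submodule.span ℝ {v : Gg n |
    (v = bY n ∧ w = 1) ∨ ((v = bH n ∨ v = bE n) ∧ w = 0) ∨ (v = bX n ∧ w = -1) ∨
    (∃ p : ℕ, 1 ≤ p ∧ p ≤ 2*n-6 ∧ v = bEps n p ∧ w = (n:ℤ) - 4 - (k:ℤ) - (p:ℤ)) ∨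
    (v = bEta n ∧ w = -3 - 2*(k:ℤ))}

/-- The negative part `m = s^{k,n}` of `g` (for `0 ≤ k ≤ n-4`): the span of the basis
elements of negative weight, i.e. of `X`, `ε_p` for `n-3-k ≤ p ≤ 2n-6`, and `η`. -/
def mSub (n k : ℕ) : Submodule ℝ (Gg n) where
  carrier := {x | x.1 0 = 0 ∧ x.1 1 = 0 ∧ x.1 2 = 0 ∧
    ∀ i : Fin (2*n-6), ((i.val:ℤ) + 1 < (n:ℤ) - 3 - (k:ℤ) → x.2.1 i = 0)}
  add_mem' := by
    rintro a b ⟨ha0, ha1, ha2, ha3⟩ ⟨hb0, hb1, hb2, hb3⟩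
    exact ⟨by simp [ha0, hb0], by simp [ha1, hb1], by simp [ha2, hb2],
      fun i hi => by simp [ha3 i hi, hb3 i hi]⟩
  zero_mem' := ⟨rfl, rfl, rfl, fun i _ => rfl⟩
  smul_mem' := by
    rintro c a ⟨ha0, ha1, ha2, ha3⟩
    exact ⟨by simp [ha0], by simp [ha1], by simp [ha2], fun i hi => by simp [ha3 i hi]⟩

/-- The non-negative part `g⁰` of `g` in the grading of `s^{k,n}`. -/
def g0Sub (n k : ℕ) : Submodule ℝ (Gg n) where
  carrier := {x | x.1 3 = 0 ∧ x.2.2 = 0 ∧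
    ∀ i : Fin (2*n-6), ((n:ℤ) - 3 - (k:ℤ) ≤ (i.val:ℤ) + 1 → x.2.1 i = 0)}
  add_mem' := by
    rintro a b ⟨ha0, ha1, ha3⟩ ⟨hb0, hb1, hb3⟩
    exact ⟨by simp [ha0, hb0], by simp [ha1, hb1], fun i hi => by simp [ha3 i hi, hb3 i hi]⟩
  zero_mem' := ⟨rfl, rfl, fun i _ => rfl⟩
  smul_mem' := by
    rintro c a ⟨ha0, ha1, ha3⟩
    exact ⟨by simp [ha0], by simp [ha1], fun i hi => by simp [ha3 i hi]⟩

/-- The negative part `m` of `g`, as a type. -/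
abbrev MT (n k : ℕ) := ↥(mSub n k)

/-- The projection `π_m : g → m` along `g⁰`. -/
def Pm (n k : ℕ) (x : Gg n) : Gg n :=
  (![0, 0, 0, x.1 3],
   (fun i => if (n:ℤ) - 3 - (k:ℤ) ≤ (i.val:ℤ) + 1 then x.2.1 i else 0, x.2.2))

lemma Pm_mem (n k : ℕ) (x : Gg n) : Pm n k x ∈ mSub n k := by
  refine ⟨?_, ?_, ?_, fun i hi => ?_⟩
  · simp [Pm]
  · simp [Pm]
  · simp [Pm]
  · show (if (n:ℤ) - 3 - (k:ℤ) ≤ (i.val:ℤ) + 1 then x.2.1 i else 0) = 0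
    rw [if_neg (by omega)]

/-- The projection `π_m : g → m`, viewed as a map into `m`. -/
def ptoM (n k : ℕ) (x : Gg n) : MT n k := ⟨Pm n k x, Pm_mem n k x⟩

/-- The Lie bracket of `m` (the bracket of `g` restricted to `m`; since `m` is closed
under the bracket, composing with the projection `π_m` does not change the value). -/
def mBrM (n k : ℕ) (x y : MT n k) : MT n k := ptoM n k (gBr n x.1 y.1)

/-- `ψ` is an ℝ-linear map `m → g`, i.e. an element of `C¹(m,g)`. -/
def IsLin1 (n k : ℕ) (ψ : MT n k → Gg n) : Prop :=
  (∀ x y, ψ (x + y) = ψ x + ψ y) ∧ ∀ (c : ℝ) (x), ψ (c • x) = c • ψ x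

/-- `ψ` is an alternating ℝ-bilinear map `m × m → g`, i.e. an element of `C²(m,g)`. -/
def IsAlt2 (n k : ℕ) (ψ : MT n k → MT n k → Gg n) : Prop :=
  (∀ y, IsLin1 n k (fun x => ψ x y)) ∧ (∀ x, IsLin1 n k (ψ x)) ∧ ∀ x, ψ x x = 0

/-- The coboundary `∂ : C¹(m,g) → C²(m,g)`,
`(∂φ)(x,y) = [x, φ y] - [y, φ x] + φ [x,y]`. -/
def cobound (n k : ℕ) (φ : MT n k → Gg n) : MT n k → MT n k → Gg n :=
  fun x y => gBr n x.1 (φ y) - gBr n y.1 (φ x) + φ (mBrM n k x y)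

/-- A 1-cochain is homogeneous of weight `w` if `ψ(g_p) ⊆ g_{p+w}` for all `p < 0`. -/
def Homog1 (n k : ℕ) (w : ℤ) (ψ : MT n k → Gg n) : Prop :=
  ∀ p : ℤ, p < 0 → ∀ x : MT n k, (x : Gg n) ∈ gComp n k p → ψ x ∈ gComp n k (p + w)

/-- A 2-cochain is homogeneous of weight `w` if `ψ(g_p × g_q) ⊆ g_{p+q+w}` for `p,q < 0`. -/
def Homog2 (n k : ℕ) (w : ℤ) (ψ : MT n k → MT n k → Gg n) : Prop :=
  ∀ p q : ℤ, p < 0 → q < 0 → ∀ x y : MT n k,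
    (x : Gg n) ∈ gComp n k p → (y : Gg n) ∈ gComp n k q → ψ x y ∈ gComp n k (p + q + w)

/-- `C¹₊(m,g)`: the span of the homogeneous 1-cochains of positive weight. -/
def C1plus (n k : ℕ) : Submodule ℝ (MT n k → Gg n) :=
  Submodule.span ℝ {ψ | IsLin1 n k ψ ∧ ∃ w : ℤ, 0 < w ∧ Homog1 n k w ψ}

/-- `C²₊(m,g)`: the span of the homogeneous alternating 2-cochains of positive weight. -/
def C2plus (n k : ℕ) : Submodule ℝ (MT n k → MT n k → Gg n) :=
  Submodule.span ℝ {ψ | IsAlt2 n k ψ ∧ ∃ w : ℤ, 0 < w ∧ Homog2 n k w ψ}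

/-- The image `∂(C¹₊(m,g)) ⊆ C²(m,g)`. -/
def imDel (n k : ℕ) : Submodule ℝ (MT n k → MT n k → Gg n) :=
  Submodule.span ℝ (cobound n k '' {φ | φ ∈ C1plus n k})

/-- The action of `A ∈ g⁰` on 1-cochains: `(A·ψ)(x) = [A, ψ x] - ψ(π_m [A, x])`. -/
def act1 (n k : ℕ) (A : Gg n) (ψ : MT n k → Gg n) : MT n k → Gg n :=
  fun x => gBr n A (ψ x) - ψ (ptoM n k (gBr n A x.1))

/-- The action of `A ∈ g⁰` on 2-cochains:
`(A·ψ)(x,y) = [A, ψ x y] - ψ(π_m [A, x]) y - ψ x (π_m [A, y])`. -/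
def act2 (n k : ℕ) (A : Gg n) (ψ : MT n k → MT n k → Gg n) : MT n k → MT n k → Gg n :=
  fun x y => gBr n A (ψ x y) - ψ (ptoM n k (gBr n A x.1)) y - ψ x (ptoM n k (gBr n A y.1))

/-- The coefficient of `ε_p` (the dual functional `ε*_p`). -/
def epsCoef (n : ℕ) (p : ℕ) (x : Gg n) : ℝ :=
  if h : 1 ≤ p ∧ p ≤ 2*n-6 then x.2.1 ⟨p-1, by omega⟩ else 0

/-- The 1-cochain `ε*_{n-3-k} ⊗ ε_{2n-6}`. -/
def cA (n k : ℕ) : MT n k → Gg n := fun x => epsCoef n (n-3-k) x.1 • bEps n (2*n-6)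

/-- The 1-cochain `X* ⊗ ε_{n-4-k}`. -/
def cB (n k : ℕ) : MT n k → Gg n := fun x => (x : Gg n).1 3 • bEps n (n-4-k)

/-- The 2-cochain `X* ∧ ε*_{n-1+k} ⊗ η`. -/
def cC (n k : ℕ) : MT n k → MT n k → Gg n := fun x y =>
  ((x : Gg n).1 3 * epsCoef n (n-1+k) y.1 - (y : Gg n).1 3 * epsCoef n (n-1+k) x.1) • bEta n

/-- The 2-cochain `ε*_{n-3-k} ∧ η* ⊗ ε_{2n-6}`. -/
def cD (n k : ℕ) : MT n k → MT n k → Gg n := fun x y =>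
  (epsCoef n (n-3-k) x.1 * (y : Gg n).2.2 - epsCoef n (n-3-k) y.1 * (x : Gg n).2.2) • bEps n (2*n-6)

/-- The inner product on `g` for which the basis `{Y,H,E,X,ε_1,…,ε_{2n-6},η}` is
orthogonal, with `|Y|² = |X|² = |η|² = 1`, `|H|² = |E|² = 2`, and
`|ε_p|² = (p-1)!/(2n-6-p)!`. -/
def Bform (n : ℕ) (x y : Gg n) : ℝ :=
  x.1 0 * y.1 0 + 2 * (x.1 1 * y.1 1) + 2 * (x.1 2 * y.1 2) + x.1 3 * y.1 3 +
  (∑ i : Fin (2*n-6),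
    ((Nat.factorial i.val : ℝ) / (Nat.factorial (2*n-7-i.val) : ℝ)) * x.2.1 i * y.2.1 i) +
  x.2.2 * y.2.2

/-- The linear map `τ : span{Y,H,E} → g` with `τ(Y) = X`, `τ(H) = H`, `τ(E) = E`
(extended to all of `g` by the same formula on coordinates). -/
def tauFun (n : ℕ) (x : Gg n) : Gg n := (![0, x.1 1, x.1 2, x.1 0], 0)

/-!
Each graded component is spanned by basis vectors, and the basis is orthogonal, so distinct
components are orthogonal. `τ` sends `Y, H, E` to `X, H, E` (of opposite weights) and kills
`X, ε_p, η`. For the adjointness, `φ(H)` and `φ(E)` are diagonal, and `φ(Y)` is the adjoint of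
`φ(X)` because `i (2n-6-i) |ε_i|² = i!/(2n-7-i)! = |ε_{i+1}|²`; the `gl₂` part is a direct check.
-/

/-- `(ε_{i+1}, ε_{i+1})`: the Heisenberg coordinates are indexed from `0`. -/
def epsWeight (n i : ℕ) : ℝ := (i.factorial : ℝ) / ((2*n-7-i).factorial : ℝ)

theorem Bform_eq (n : ℕ) (x y : Gg n) :
    Bform n x y = x.1 0 * y.1 0 + 2 * (x.1 1 * y.1 1) + 2 * (x.1 2 * y.1 2) + x.1 3 * y.1 3 +
      (∑ i : Fin (2*n-6), epsWeight n i * x.2.1 i * y.2.1 i) + x.2.2 * y.2.2 := rfl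

def bformBilin (n : ℕ) : LinearMap.BilinForm ℝ (Gg n) :=
  LinearMap.mk₂ ℝ (Bform n)
    (fun x₁ x₂ y => by
      simp only [Bform_eq, Prod.fst_add, Prod.snd_add, Pi.add_apply, mul_add, add_mul,
        Finset.sum_add_distrib]
      ring)
    (fun c x y => by
      simp only [Bform_eq, Prod.smul_fst, Prod.smul_snd, Pi.smul_apply, smul_eq_mul, mul_add,
        Finset.mul_sum]
      ring_nf)
    (fun x y₁ y₂ => by
      simp only [Bform_eq, Prod.fst_add, Prod.snd_add, Pi.add_apply, mul_add,
        Finset.sum_add_distrib]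
      ring)
    (fun c x y => by
      simp only [Bform_eq, Prod.smul_fst, Prod.smul_snd, Pi.smul_apply, smul_eq_mul, mul_add,
        Finset.mul_sum]
      ring_nf)

theorem LinearMap.eq_zero_of_mem_span₂ {R M N P : Type*} [CommSemiring R] [AddCommMonoid M]
    [AddCommMonoid N] [AddCommMonoid P] [Module R M] [Module R N] [Module R P]
    (B : M →ₗ[R] N →ₗ[R] P) {s : Set M} {t : Set N} (h : ∀ x ∈ s, ∀ y ∈ t, B x y = 0)
    {x : M} {y : N} (hx : x ∈ Submodule.span R s) (hy : y ∈ Submodule.span R t) :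
    B x y = 0 := by
  have hs : ∀ x ∈ s, B x y = 0 := fun x' hx' =>
    LinearMap.eqOn_span (g := 0) (fun y' hy' => h x' hx' y' hy') hy
  exact LinearMap.eqOn_span (f := B.flip y) (g := 0) hs hx

def IsWeightVector (n k : ℕ) (w : ℤ) (v : Gg n) : Prop :=
  (v = bY n ∧ w = 1) ∨ ((v = bH n ∨ v = bE n) ∧ w = 0) ∨ (v = bX n ∧ w = -1) ∨
    (∃ p : ℕ, 1 ≤ p ∧ p ≤ 2*n-6 ∧ v = bEps n p ∧ w = (n:ℤ) - 4 - (k:ℤ) - (p:ℤ)) ∨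
    (v = bEta n ∧ w = -3 - 2*(k:ℤ))

theorem gComp_eq_span (n k : ℕ) (w : ℤ) :
    gComp n k w = Submodule.span ℝ {v | IsWeightVector n k w v} := rfl

theorem Bform_bEps_bEps {n r s : ℕ} (hrs : r ≠ s) : Bform n (bEps n r) (bEps n s) = 0 := by
  have hterm : ∀ i : Fin (2*n-6), epsWeight n i * (bEps n r).2.1 i * (bEps n s).2.1 i = 0 := by
    intro i
    by_cases hr : i.val + 1 = r
    · simp [bEps, epsV, show i.val + 1 ≠ s by omega]
    · simp [bEps, epsV, hr]
  rw [Bform_eq, Finset.sum_eq_zero fun i _ => hterm i]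
  simp [bEps, epsV]

theorem Bform_eq_zero_of_isWeightVector {n k : ℕ} {p q : ℤ} (hpq : p ≠ q) {u v : Gg n}
    (hu : IsWeightVector n k p u) (hv : IsWeightVector n k q v) : Bform n u v = 0 := by
  rcases hu with ⟨rfl, rfl⟩ | ⟨rfl | rfl, rfl⟩ | ⟨rfl, rfl⟩ | ⟨r, -, -, rfl, rfl⟩ | ⟨rfl, rfl⟩ <;>
  rcases hv with ⟨rfl, rfl⟩ | ⟨rfl | rfl, rfl⟩ | ⟨rfl, rfl⟩ | ⟨s, -, -, rfl, rfl⟩ | ⟨rfl, rfl⟩ <;>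
  first
    | omega
    | exact Bform_bEps_bEps (n := n) (r := r) (s := s) (by omega)
    | simp [Bform_eq, bY, bH, bE, bX, bEps, bEta, epsV, etaV]

theorem Bform_eq_zero_of_mem_gComp {n k : ℕ} {p q : ℤ} (hpq : p ≠ q) {x y : Gg n}
    (hx : x ∈ gComp n k p) (hy : y ∈ gComp n k q) : Bform n x y = 0 := by
  rw [gComp_eq_span] at hx hy
  exact (bformBilin n).eq_zero_of_mem_span₂
    (fun _ hu _ hv => Bform_eq_zero_of_isWeightVector hpq hu hv) hx hy

def tauLin (n : ℕ) : Gg n →ₗ[ℝ] Gg n where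
  toFun := tauFun n
  map_add' x y := Prod.ext (funext fun i => by fin_cases i <;> simp [tauFun]) (by simp [tauFun])
  map_smul' c x := Prod.ext (funext fun i => by fin_cases i <;> simp [tauFun]) (by simp [tauFun])

theorem tauFun_mem_gComp_neg_of_isWeightVector {n k : ℕ} {p : ℤ} {u : Gg n}
    (hu : IsWeightVector n k p u) : tauFun n u ∈ gComp n k (-p) := by
  rcases hu with ⟨rfl, rfl⟩ | ⟨rfl | rfl, rfl⟩ | ⟨rfl, -⟩ | ⟨r, -, -, rfl, -⟩ | ⟨rfl, -⟩
  · have hYX : tauFun n (bY n) = bX n :=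
      Prod.ext (funext fun i => by fin_cases i <;> simp [tauFun, bY, bX]) (by simp [tauFun, bX])
    exact Submodule.subset_span (Or.inr (Or.inr (Or.inl ⟨hYX, rfl⟩)))
  · have hH : tauFun n (bH n) = bH n :=
      Prod.ext (funext fun i => by fin_cases i <;> simp [tauFun, bH]) (by simp [tauFun, bH])
    exact Submodule.subset_span (Or.inr (Or.inl ⟨Or.inl hH, neg_zero⟩))
  · have hE : tauFun n (bE n) = bE n :=
      Prod.ext (funext fun i => by fin_cases i <;> simp [tauFun, bE]) (by simp [tauFun, bE])
    exact Submodule.subset_span (Or.inr (Or.inl ⟨Or.inr hE, neg_zero⟩))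
  all_goals
    convert (gComp n k (-p)).zero_mem using 1
    simp [tauFun, bX, bEps, bEta, epsV, etaV]

theorem tauFun_mem_gComp_neg {n k : ℕ} {p : ℤ} {x : Gg n} (hx : x ∈ gComp n k p) :
    tauFun n x ∈ gComp n k (-p) := by
  rw [gComp_eq_span] at hx
  exact (Submodule.map_span_le (tauLin n) _ _).2
    (fun _ hu => tauFun_mem_gComp_neg_of_isWeightVector hu) (Submodule.mem_map_of_mem hx)

theorem factorial_div_factorial_sub_mul {m i : ℕ} (hi : i < m) :
    ((i.factorial : ℝ) / ((m - i).factorial : ℝ)) * (((i : ℝ) + 1) * ((m - i : ℕ) : ℝ)) =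
      ((i + 1).factorial : ℝ) / ((m - (i + 1)).factorial : ℝ) := by
  obtain ⟨j, hj⟩ : ∃ j, m - i = j + 1 := ⟨m - (i + 1), by omega⟩
  rw [hj, show m - (i + 1) = j by omega, Nat.factorial_succ, Nat.factorial_succ]
  push_cast
  field_simp

theorem Fin.sum_shift_adjoint {N : ℕ} (w a : ℕ → ℝ)
    (hw : ∀ i, i + 1 < N → w i * a i = w (i + 1)) (u v : Fin N → ℝ) :
    ∑ i : Fin N, w i * (a i * (if h : i.val + 1 < N then u ⟨i.val + 1, h⟩ else 0)) * v i =
      ∑ i : Fin N, w i * u i * (if h : 0 < i.val then v ⟨i.val - 1, by omega⟩ else 0) := by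
  cases N with
  | zero => simp
  | succ M =>
    rw [Fin.sum_univ_castSucc, Fin.sum_univ_succ]
    simp only [Fin.val_castSucc, Fin.val_last, Fin.val_succ, Fin.val_zero, lt_self_iff_false,
      add_lt_add_iff_right, Fin.is_lt, ↓reduceDIte, mul_zero, zero_mul, add_zero, zero_add,
      Nat.succ_pos, add_tsub_cancel_right]
    refine Finset.sum_congr rfl fun i _ => ?_
    rw [← hw i (by omega), ← mul_assoc]
    rfl

theorem epsWeight_mul {n i : ℕ} (hi : i + 1 < 2*n-6) :
    epsWeight n i * (((i : ℝ) + 1) * (2*(n:ℝ) - 7 - (i : ℝ))) = epsWeight n (i + 1) := by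
  have hcast : ((2*n-7-i : ℕ) : ℝ) = 2*(n:ℝ) - 7 - (i : ℝ) := by
    rw [Nat.cast_sub (by omega), Nat.cast_sub (by omega)]
    push_cast
    ring
  rw [epsWeight, epsWeight, ← hcast]
  exact factorial_div_factorial_sub_mul (by omega)

theorem sum_epsWeight_phi_adjoint (n : ℕ) (a : G2) (ha : a 3 = 0) (u v : Hs n) :
    ∑ i : Fin (2*n-6), epsWeight n i * (phi n a u).1 i * v.1 i =
      ∑ i : Fin (2*n-6), epsWeight n i * u.1 i * (phi n ![0, a 1, a 2, a 0] v).1 i := by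
  rw [← sub_eq_zero, ← Finset.sum_sub_distrib]
  calc ∑ i : Fin (2*n-6), (epsWeight n i * (phi n a u).1 i * v.1 i -
          epsWeight n i * u.1 i * (phi n ![0, a 1, a 2, a 0] v).1 i)
      = a 0 * (∑ i : Fin (2*n-6), epsWeight n i * ((((i : ℕ) : ℝ) + 1) *
            (2*(n:ℝ) - 7 - ((i : ℕ) : ℝ)) *
            (if h : i.val + 1 < 2*n-6 then u.1 ⟨i.val + 1, h⟩ else 0)) * v.1 i -
          ∑ i : Fin (2*n-6), epsWeight n i * u.1 i *
            (if h : 0 < i.val then v.1 ⟨i.val - 1, by omega⟩ else 0)) := by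
        rw [← Finset.sum_sub_distrib, Finset.mul_sum]
        refine Finset.sum_congr rfl fun i _ => ?_
        simp only [phi, ha, Matrix.cons_val_zero, Matrix.cons_val_one, Matrix.cons_val_two,
          Matrix.cons_val_three, Matrix.head_cons, Matrix.tail_cons]
        ring
    _ = 0 := by
        rw [Fin.sum_shift_adjoint (epsWeight n)
          (fun i => ((i : ℝ) + 1) * (2*(n:ℝ) - 7 - (i : ℝ))) (fun i hi => epsWeight_mul hi),
          sub_self, mul_zero]

theorem gBr_mk_zero_left (n : ℕ) (a : G2) (x : Gg n) :
    gBr n (a, 0) x = (gl2Br a x.1, phi n a x.2) := by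
  have hphi : phi n x.1 0 = 0 := Prod.ext (funext fun i => by simp [phi]) (by simp [phi])
  have hheis : heisBr n 0 x.2 = 0 := by simp [heisBr]
  simp [gBr, hphi, hheis]

theorem Bform_gBr_mk_zero_left (n : ℕ) (a : G2) (ha : a 3 = 0) (x y : Gg n) :
    Bform n (gBr n (a, 0) x) y = Bform n x (gBr n (tauFun n (a, 0)) y) := by
  rw [show tauFun n (a, 0) = (![0, a 1, a 2, a 0], 0) from rfl, gBr_mk_zero_left,
    gBr_mk_zero_left, Bform_eq, Bform_eq, sum_epsWeight_phi_adjoint n a ha]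
  simp only [phi, gl2Br, ha, Matrix.cons_val_zero, Matrix.cons_val_one, Matrix.cons_val_two,
    Matrix.cons_val_three, Matrix.head_cons, Matrix.tail_cons]
  ring

theorem exists_mk_zero_of_mem_span {n : ℕ} {A : Gg n}
    (hA : A ∈ Submodule.span ℝ {bY n, bH n, bE n}) : ∃ a : G2, a 3 = 0 ∧ A = (a, 0) := by
  induction hA using Submodule.span_induction with
  | mem u hu =>
    rcases hu with rfl | rfl | rfl <;> exact ⟨_, rfl, rfl⟩
  | zero => exact ⟨0, rfl, rfl⟩
  | add _ _ _ _ hx hy =>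
    obtain ⟨a, ha, rfl⟩ := hx
    obtain ⟨b, hb, rfl⟩ := hy
    exact ⟨a + b, by simp [ha, hb], by simp⟩
  | smul c _ _ hx =>
    obtain ⟨a, ha, rfl⟩ := hx
    exact ⟨c • a, by simp [ha], by simp⟩

theorem morimoto_data_for_symplectic_symbol_general (n : ℕ) :
    (∀ p q : ℤ, p ≠ q → ∀ x ∈ gComp n (n-4) p, ∀ y ∈ gComp n (n-4) q, Bform n x y = 0) ∧
    (∀ p : ℤ, 0 ≤ p → ∀ x : Gg n, x ∈ Submodule.span ℝ {bY n, bH n, bE n} →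
      x ∈ gComp n (n-4) p → tauFun n x ∈ gComp n (n-4) (-p)) ∧
    (∀ A ∈ Submodule.span ℝ {bY n, bH n, bE n}, ∀ x y : Gg n,
      Bform n (gBr n A x) y = Bform n x (gBr n (tauFun n A) y)) := by
  refine ⟨fun p q hpq x hx y hy => Bform_eq_zero_of_mem_gComp hpq hx hy,
    fun p _ x _ hx => tauFun_mem_gComp_neg hx, fun A hA x y => ?_⟩
  obtain ⟨a, ha, rfl⟩ := exists_mk_zero_of_mem_span hA
  exact Bform_gBr_mk_zero_left n a ha x y

/-- with the grading `wght Y = 1`, `wght H = wght E = 0`, `wght X = -1`,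
`wght ε_i = -i`, `wght η = 5-2n` (the case `k = n-4`):
(1) distinct graded components of `g` are orthogonal for `(·,·)`;
(2) `τ` maps the weight-`p` part of `span{Y,H,E}` into the weight `-p` part of `g`
for every `p ≥ 0`;
(3) `([A,x], y) = (x, [τ(A), y])` for all `x, y ∈ g` and `A ∈ span{Y,H,E}`. -/
theorem morimoto_data_for_symplectic_symbol (n : ℕ) (hn : 6 ≤ n) :
    (∀ p q : ℤ, p ≠ q → ∀ x ∈ gComp n (n-4) p, ∀ y ∈ gComp n (n-4) q, Bform n x y = 0) ∧
    (∀ p : ℤ, 0 ≤ p → ∀ x : Gg n, x ∈ Submodule.span ℝ {bY n, bH n, bE n} →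
      x ∈ gComp n (n-4) p → tauFun n x ∈ gComp n (n-4) (-p)) ∧
    (∀ A ∈ Submodule.span ℝ {bY n, bH n, bE n}, ∀ x y : Gg n,
      Bform n (gBr n A x) y = Bform n x (gBr n (tauFun n A) y)) :=
  morimoto_data_for_symplectic_symbol_general n
end
end

section
/- For every integer k with 0 ≤ k ≤ n−5: the eigenspace of the operator ψ ↦ H·ψ on C¹(m,g) with eigenvalue 2(n+k−3) is one-dimensional, spanned by the cochain ε*_{n−3−k} ⊗ ε_{2n−6}; moreover 2(n+k−3) is the largest eigenvalue of this operator on C¹(m,g). -/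
noncomputable section

open scoped BigOperators

/-!
`ad H` is diagonal on `g`: its eigenvalues are `-2, 0, 2` on `gl₂`, `0` on `η` and `2p + 5 - 2n`
on `ε_p`, so the largest one is `2n - 7`, attained only on `ε_{2n-6}`. The projection `π_m ∘ ad H`
is diagonal on the basis `X, η, ε_p` (`p ≥ n-3-k`) of `m` too, so if `H·ψ = μψ` and `x` is such a
basis vector of `H`-weight `λ`, then `ψ x` is an `ad H`-eigenvector of eigenvalue `μ + λ` and
vanishes once `μ + λ > 2n - 7`. The smallest weight in `m` is `-1-2k`, that of `ε_{n-3-k}`, and it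
is attained there only. Hence for `μ ≥ 2(n+k-3)` only `ψ(ε_{n-3-k})` can be nonzero, it is zero
when `μ > 2(n+k-3)`, and a multiple of `ε_{2n-6}` when `μ = 2(n+k-3)`.
-/

lemma gBr_bH (n : ℕ) (v : Gg n) :
    gBr n (bH n) v =
      (![-2 * v.1 0, 0, 0, 2 * v.1 3],
        (fun i => (2 * (i.val : ℝ) + 7 - 2 * n) * v.2.1 i, 0)) := by
  refine Prod.ext ?_ (Prod.ext ?_ ?_)
  · funext j
    fin_cases j <;> simp [gBr, gl2Br, bH]
  · funext i
    simp [gBr, bH, phi, heisBr]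
  · simp [gBr, bH, phi, heisBr]

lemma coords_eq_zero_of_gBr_bH_eq_smul {n : ℕ} {v : Gg n} {ν : ℝ} (hν : 2 < ν)
    (h : gBr n (bH n) v = ν • v) :
    v.1 = 0 ∧ v.2.2 = 0 ∧ ∀ i, 2 * (i.val : ℝ) + 7 - 2 * n ≠ ν → v.2.1 i = 0 := by
  rw [gBr_bH] at h
  have cancel : ∀ {c a : ℝ}, c ≠ ν → c * a = ν * a → a = 0 := fun hc ha =>
    (mul_eq_mul_right_iff.mp ha).resolve_left hc
  refine ⟨funext fun j => ?_, ?_, fun i hi =>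
    cancel hi (by simpa using congrFun (congrArg (·.2.1) h) i)⟩
  · have hj := congrFun (congrArg Prod.fst h) j
    fin_cases j
    · exact cancel (c := -2) (by linarith) (by simpa using hj)
    · exact cancel (c := 0) (by linarith) (by simpa using hj)
    · exact cancel (c := 0) (by linarith) (by simpa using hj)
    · exact cancel (c := 2) (by linarith) (by simpa using hj)
  · exact cancel (c := 0) (by linarith) (by simpa using congrArg (·.2.2) h)

lemma cast_val_add_seven_le {n : ℕ} (i : Fin (2 * n - 6)) : (i.val : ℝ) + 7 ≤ 2 * n := by
  have : i.val + 7 ≤ 2 * n := by omega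
  exact_mod_cast this

lemma eq_zero_of_gBr_bH_eq_smul {n : ℕ} (hn : 5 ≤ n) {v : Gg n} {ν : ℝ}
    (hν : 2 * (n : ℝ) - 7 < ν) (h : gBr n (bH n) v = ν • v) : v = 0 := by
  have hn' : (5 : ℝ) ≤ n := by exact_mod_cast hn
  obtain ⟨hfst, hη, hε⟩ := coords_eq_zero_of_gBr_bH_eq_smul (by linarith) h
  exact Prod.ext hfst
    (Prod.ext (funext fun i => hε i (by linarith [cast_val_add_seven_le i])) hη)

lemma eq_smul_bEps_of_gBr_bH_eq_smul {n : ℕ} (hn : 5 ≤ n) {v : Gg n}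
    (h : gBr n (bH n) v = (2 * (n : ℝ) - 7) • v) :
    v = v.2.1 ⟨2 * n - 7, by omega⟩ • bEps n (2 * n - 6) := by
  have hn' : (5 : ℝ) ≤ n := by exact_mod_cast hn
  obtain ⟨hfst, hη, hε⟩ := coords_eq_zero_of_gBr_bH_eq_smul (by linarith) h
  refine Prod.ext (by simp [hfst, bEps])
    (Prod.ext (funext fun i => ?_) (by simp [hη, bEps, epsV]))
  by_cases hi : i.val + 1 = 2 * n - 6
  · have hi' : i = ⟨2 * n - 7, by omega⟩ := Fin.ext (by simp only; omega)
    simp [bEps, epsV, hi, ← hi']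
  · refine (hε i fun heq => hi ?_).trans (by simp [bEps, epsV, hi])
    have : (i.val : ℝ) + 7 = 2 * n := by linarith
    have : i.val + 7 = 2 * n := by exact_mod_cast this
    omega

section Basis

variable (n k : ℕ)

def mX : MT n k := ⟨bX n, ⟨rfl, rfl, rfl, fun _ _ => rfl⟩⟩

def mEta : MT n k := ⟨bEta n, ⟨rfl, rfl, rfl, fun _ _ => rfl⟩⟩

/-- `ε_{i+1}` (the index `i` is 0-based) when it lies in `m`, and `0` otherwise. -/
def mEps (i : Fin (2 * n - 6)) : MT n k :=
  if h : (n : ℤ) - 3 - k ≤ i.val + 1 then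
    ⟨bEps n (i.val + 1), ⟨rfl, rfl, rfl, fun _ hj => if_neg (by omega)⟩⟩
  else 0

variable {n k}

lemma coe_smul_mEps (x : MT n k) (i : Fin (2 * n - 6)) :
    (x : Gg n).2.1 i • (mEps n k i : Gg n) = (x : Gg n).2.1 i • bEps n (i.val + 1) := by
  unfold mEps
  split_ifs with h
  · rfl
  · rw [x.prop.2.2.2 i (by omega)]
    simp

lemma MT.eq_sum (x : MT n k) :
    x = (x : Gg n).1 3 • mX n k + (x : Gg n).2.2 • mEta n k +
      ∑ i, (x : Gg n).2.1 i • mEps n k i := by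
  obtain ⟨h0, h1, h2, -⟩ := x.prop
  apply Subtype.ext
  simp only [Submodule.coe_add, Submodule.coe_smul, Submodule.coe_sum, coe_smul_mEps]
  refine Prod.ext (funext fun j => ?_) (Prod.ext (funext fun j => ?_) ?_)
  · fin_cases j <;> simp [mX, mEta, bX, bEta, bEps, epsV, Prod.fst_sum, h0, h1, h2]
  · simp [mX, mEta, bX, bEta, etaV, bEps, epsV, Prod.snd_sum, Prod.fst_sum, Finset.sum_apply,
      Fin.val_inj]
  · simp [mX, mEta, bX, bEta, etaV, bEps, epsV, Prod.snd_sum]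

end Basis

section Cochains

variable {n k : ℕ} {ψ : MT n k → Gg n}

def IsLin1.toLinearMap (hψ : IsLin1 n k ψ) : MT n k →ₗ[ℝ] Gg n := ⟨⟨ψ, hψ.1⟩, hψ.2⟩

lemma IsLin1.map_zero (hψ : IsLin1 n k ψ) : ψ 0 = 0 :=
  hψ.toLinearMap.map_zero

lemma IsLin1.apply_eq_sum (hψ : IsLin1 n k ψ) (x : MT n k) :
    ψ x = (x : Gg n).1 3 • ψ (mX n k) + (x : Gg n).2.2 • ψ (mEta n k) +
      ∑ i, (x : Gg n).2.1 i • ψ (mEps n k i) := by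
  change hψ.toLinearMap x = _
  conv_lhs => rw [MT.eq_sum x]
  simp only [map_add, map_smul, map_sum]
  rfl

lemma coe_ptoM_gBr_bH (x : MT n k) :
    (ptoM n k (gBr n (bH n) x) : Gg n) =
      (![0, 0, 0, 2 * (x : Gg n).1 3],
        (fun i => (2 * (i.val : ℝ) + 7 - 2 * n) * (x : Gg n).2.1 i, 0)) := by
  change Pm n k _ = _
  rw [gBr_bH]
  refine Prod.ext (funext fun j => ?_) (Prod.ext (funext fun i => ?_) rfl)
  · fin_cases j <;> simp [Pm]
  · simp only [Pm]
    split_ifs with h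
    · rfl
    · rw [x.prop.2.2.2 i (by omega), mul_zero]

lemma ptoM_gBr_bH_mX : ptoM n k (gBr n (bH n) (mX n k)) = (2 : ℝ) • mX n k := by
  apply Subtype.ext
  rw [coe_ptoM_gBr_bH]
  refine Prod.ext (funext fun j => ?_) (Prod.ext (funext fun i => ?_) ?_)
  · fin_cases j <;> simp [mX, bX]
  · simp [mX, bX]
  · simp [mX, bX]

lemma ptoM_gBr_bH_mEta : ptoM n k (gBr n (bH n) (mEta n k)) = (0 : ℝ) • mEta n k := by
  apply Subtype.ext
  rw [coe_ptoM_gBr_bH]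
  refine Prod.ext (funext fun j => ?_) (Prod.ext (funext fun i => ?_) ?_)
  · fin_cases j <;> simp [mEta, bEta, etaV]
  · simp [mEta, bEta, etaV]
  · simp [mEta, bEta, etaV]

lemma ptoM_gBr_bH_mEps (i : Fin (2 * n - 6)) :
    ptoM n k (gBr n (bH n) (mEps n k i)) = (2 * (i.val : ℝ) + 7 - 2 * n) • mEps n k i := by
  apply Subtype.ext
  rw [coe_ptoM_gBr_bH]
  unfold mEps
  split_ifs
  · refine Prod.ext (funext fun j => ?_) (Prod.ext (funext fun j => ?_) ?_)
    · fin_cases j <;> simp [bEps]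
    · by_cases hj : j = i
      · simp [hj]
      · simp [bEps, epsV, Fin.val_inj, hj]
    · simp [bEps, epsV]
  · ext j <;> (try fin_cases j) <;> simp

lemma IsLin1.gBr_bH_apply_eq_smul (hψ : IsLin1 n k ψ) {μ l : ℝ}
    (hact : act1 n k (bH n) ψ = μ • ψ) {x : MT n k}
    (hx : ptoM n k (gBr n (bH n) x) = l • x) :
    gBr n (bH n) (ψ x) = (μ + l) • ψ x := by
  have h := congrFun hact x
  simp only [act1, Pi.smul_apply, hx, hψ.2] at h
  rw [add_smul, ← h, sub_add_cancel]

end Cochains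

section LowestCochain

variable {n k : ℕ}

lemma epsCoef_add (p : ℕ) (x y : Gg n) :
    epsCoef n p (x + y) = epsCoef n p x + epsCoef n p y := by
  unfold epsCoef
  split_ifs <;> simp

lemma epsCoef_smul (p : ℕ) (c : ℝ) (x : Gg n) : epsCoef n p (c • x) = c * epsCoef n p x := by
  unfold epsCoef
  split_ifs <;> simp

lemma isLin1_cA : IsLin1 n k (cA n k) :=
  ⟨fun x y => by simp [cA, epsCoef_add, add_smul],
    fun c x => by simp [cA, epsCoef_smul, mul_smul]⟩

variable (hkn : k + 4 ≤ n)
include hkn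

lemma cast_sub_four_sub : ((n - 4 - k : ℕ) : ℝ) = n - 4 - k := by
  rw [Nat.sub_sub, Nat.cast_sub (by omega), Nat.cast_add]
  ring

lemma cA_apply (x : MT n k) :
    cA n k x = (x : Gg n).2.1 ⟨n - 4 - k, by omega⟩ • bEps n (2 * n - 6) := by
  simp only [cA, epsCoef]
  rw [dif_pos (by omega)]
  congr 1
  exact congrArg (x : Gg n).2.1 (Fin.ext (by simp only; omega))

lemma act1_bH_cA : act1 n k (bH n) (cA n k) = (2 * (n : ℝ) + 2 * k - 6) • cA n k := by
  funext x
  simp only [act1, cA_apply hkn, Pi.smul_apply]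
  rw [coe_ptoM_gBr_bH, gBr_bH]
  refine Prod.ext (funext fun j => ?_) (Prod.ext (funext fun j => ?_) ?_)
  · fin_cases j <;> simp [bEps]
  · simp only [bEps, epsV, Prod.smul_snd, Prod.smul_fst, Prod.snd_sub, Prod.fst_sub,
      Pi.sub_apply, Pi.smul_apply, smul_eq_mul]
    split_ifs with hj
    · have hj' : (j.val : ℝ) + 7 = 2 * n := by
        exact_mod_cast (show j.val + 7 = 2 * n by omega)
      rw [cast_sub_four_sub hkn]
      linear_combination (2 * (x : Gg n).2.1 ⟨n - 4 - k, by omega⟩) * hj'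
    · simp
  · simp [bEps, epsV]

lemma cA_ne_zero : cA n k ≠ 0 := by
  intro h
  have hcond : (n : ℤ) - 3 - k ≤ ((n - 4 - k : ℕ) : ℤ) + 1 := by omega
  have h1 := congrArg (fun v : Gg n => v.2.1 ⟨2 * n - 7, by omega⟩)
    (congrFun h (mEps n k ⟨n - 4 - k, by omega⟩))
  simp [cA_apply hkn, mEps, hcond, bEps, epsV] at h1
  omega

end LowestCochain

section Eigencochains

variable {n k : ℕ} {ψ : MT n k → Gg n}

lemma IsLin1.apply_eq_smul_apply_mEps (hn : 5 ≤ n) (hkn : k + 4 ≤ n) (hψ : IsLin1 n k ψ)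
    {μ : ℝ} (hμ : 2 * (n : ℝ) + 2 * k - 6 ≤ μ) (hact : act1 n k (bH n) ψ = μ • ψ) (x : MT n k) :
    ψ x = (x : Gg n).2.1 ⟨n - 4 - k, by omega⟩ • ψ (mEps n k ⟨n - 4 - k, by omega⟩) := by
  have hk : (0 : ℝ) ≤ k := k.cast_nonneg
  have hvanish : ∀ {v : MT n k} {l : ℝ}, 2 * (n : ℝ) - 7 < μ + l →
      ptoM n k (gBr n (bH n) v) = l • v → ψ v = 0 := fun hl hv =>
    eq_zero_of_gBr_bH_eq_smul hn hl (hψ.gBr_bH_apply_eq_smul hact hv)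
  have hX : ψ (mX n k) = 0 := hvanish (by linarith) ptoM_gBr_bH_mX
  have hEta : ψ (mEta n k) = 0 := hvanish (by linarith) ptoM_gBr_bH_mEta
  have hEps : ∀ i ≠ ⟨n - 4 - k, by omega⟩, (x : Gg n).2.1 i • ψ (mEps n k i) = 0 := by
    intro i hi
    by_cases h : (n : ℤ) - 3 - k ≤ i.val + 1
    · have hi' : (n : ℤ) - 3 - k ≤ i.val := by
        have : i.val ≠ n - 4 - k := fun he => hi (Fin.ext he)
        omega
      have : (n : ℝ) - 3 - k ≤ i.val := by exact_mod_cast hi'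
      rw [hvanish (by linarith) (ptoM_gBr_bH_mEps i), smul_zero]
    · rw [mEps, dif_neg h, hψ.map_zero, smul_zero]
  rw [hψ.apply_eq_sum x, hX, hEta, smul_zero, smul_zero, zero_add, zero_add,
    Finset.sum_eq_single_of_mem _ (Finset.mem_univ _) fun i _ hi => hEps i hi]

lemma IsLin1.gBr_bH_apply_mEps_lowest (hkn : k + 4 ≤ n) (hψ : IsLin1 n k ψ) {μ : ℝ}
    (hact : act1 n k (bH n) ψ = μ • ψ) :
    gBr n (bH n) (ψ (mEps n k ⟨n - 4 - k, by omega⟩)) =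
      (μ - (2 * (n : ℝ) + 2 * k - 6) + (2 * n - 7)) •
        ψ (mEps n k ⟨n - 4 - k, by omega⟩) := by
  convert hψ.gBr_bH_apply_eq_smul hact (ptoM_gBr_bH_mEps _) using 2
  simp only [cast_sub_four_sub hkn]
  ring

lemma IsLin1.exists_eq_smul_cA (hn : 5 ≤ n) (hkn : k + 4 ≤ n) (hψ : IsLin1 n k ψ)
    (hact : act1 n k (bH n) ψ = (2 * (n : ℝ) + 2 * k - 6) • ψ) :
    ∃ c : ℝ, ψ = c • cA n k := by
  obtain ⟨c, hc⟩ : ∃ c : ℝ, ψ (mEps n k ⟨n - 4 - k, by omega⟩) = c • bEps n (2 * n - 6) :=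
    ⟨_, eq_smul_bEps_of_gBr_bH_eq_smul hn
      (by simpa using hψ.gBr_bH_apply_mEps_lowest hkn hact)⟩
  refine ⟨c, funext fun x => ?_⟩
  rw [hψ.apply_eq_smul_apply_mEps hn hkn le_rfl hact x, hc, Pi.smul_apply, cA_apply hkn,
    smul_comm]

lemma IsLin1.eq_zero_of_act1_eq_smul (hn : 5 ≤ n) (hkn : k + 4 ≤ n) (hψ : IsLin1 n k ψ)
    {μ : ℝ} (hμ : 2 * (n : ℝ) + 2 * k - 6 < μ) (hact : act1 n k (bH n) ψ = μ • ψ) : ψ = 0 := by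
  have hlowest := eq_zero_of_gBr_bH_eq_smul hn (by linarith)
    (hψ.gBr_bH_apply_mEps_lowest hkn hact)
  funext x
  rw [hψ.apply_eq_smul_apply_mEps hn hkn hμ.le hact x, hlowest, smul_zero, Pi.zero_apply]

end Eigencochains

/-- for `0 ≤ k ≤ n-5`, in the grading of `s^{k,n}`, the eigenspace of the
operator `ψ ↦ H·ψ` on `C¹(m,g)` with eigenvalue `2(n+k-3)` is one-dimensional, spanned
by the cochain `ε*_{n-3-k} ⊗ ε_{2n-6}`; moreover `2(n+k-3)` is the largest eigenvalue
of this operator on `C¹(m,g)`. -/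
theorem H_eigenspace_on_C1 (n k : ℕ) (hn : 6 ≤ n) (hk : k ≤ n - 5) :
    IsLin1 n k (cA n k) ∧ cA n k ≠ 0 ∧
    act1 n k (bH n) (cA n k) = (2*(n:ℝ) + 2*(k:ℝ) - 6) • cA n k ∧
    (∀ ψ : MT n k → Gg n, IsLin1 n k ψ →
      act1 n k (bH n) ψ = (2*(n:ℝ) + 2*(k:ℝ) - 6) • ψ → ∃ c : ℝ, ψ = c • cA n k) ∧
    (∀ μ : ℝ, 2*(n:ℝ) + 2*(k:ℝ) - 6 < μ →
      ∀ ψ : MT n k → Gg n, IsLin1 n k ψ → act1 n k (bH n) ψ = μ • ψ → ψ = 0) := by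
  have hn5 : 5 ≤ n := by omega
  have hkn : k + 4 ≤ n := by omega
  exact ⟨isLin1_cA, cA_ne_zero hkn, act1_bH_cA hkn,
    fun _ hψ => hψ.exists_eq_smul_cA hn5 hkn,
    fun _ hμ _ hψ => hψ.eq_zero_of_act1_eq_smul hn5 hkn hμ⟩
end
end

section
/- For every integer k with 0 ≤ k ≤ n−5: ∂(ε*_{n−3−k} ⊗ ε_{2n−6}) = 0. -/
noncomputable section

open scoped BigOperators

lemma gBr_cA_zero (n k : ℕ) (hn : 6 ≤ n) (hk : k ≤ n - 5) (x y : MT n k) :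
    gBr n (x : Gg n) (cA n k y) = 0 := by
  obtain ⟨hx0, hx1, hx2, hx3⟩ := x.2
  set c := epsCoef n (n-3-k) (y : Gg n) with hc
  have hx00 : (x : Gg n).2.1 ⟨0, by omega⟩ = 0 := x.2.2.2.2 _ (by push_cast; omega)
  refine Prod.ext ?_ (Prod.ext ?_ ?_)
  · show gl2Br (x : Gg n).1 (c • bEps n (2*n-6)).1 = 0
    funext j
    fin_cases j <;>
      simp [gl2Br, bEps, Matrix.cons_val_zero, Matrix.cons_val_one] <;> ring
  · funext i
    show (phi n (x : Gg n).1 (c • bEps n (2*n-6)).2).1 i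
        - (phi n (c • bEps n (2*n-6)).1 (x : Gg n).2).1 i
        + (heisBr n (x : Gg n).2 (c • bEps n (2*n-6)).2).1 i = 0
    have hne : ¬ (i.val - 1 + 1 = 2*n - 6) := by have := i.isLt; omega
    simp [phi, heisBr, bEps, epsV, hx0, hx1, hx2, hne]
  · show (phi n (x : Gg n).1 (c • bEps n (2*n-6)).2).2
        - (phi n (c • bEps n (2*n-6)).1 (x : Gg n).2).2
        + (heisBr n (x : Gg n).2 (c • bEps n (2*n-6)).2).2 = 0
    have hsum : ∀ i : Fin (2*n-6),
        (-1 : ℝ)^(i.val+1) * (x : Gg n).2.1 i * ((c • bEps n (2*n-6)).2).1 i.rev = 0 := by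
      intro i
      by_cases hi : i.val = 0
      · have : (x : Gg n).2.1 i = 0 := x.2.2.2.2 i (by push_cast; omega)
        simp [this]
      · have h' : ¬ (2*n-6-(i.val+1)+1 = 2*n-6) := by have := i.isLt; omega
        simp [bEps, epsV, Fin.val_rev, h']
    have hh : (heisBr n (x : Gg n).2 (c • bEps n (2*n-6)).2).2 = 0 := by
      simp only [heisBr]
      exact Finset.sum_eq_zero (fun i _ => hsum i)
    have hp1 : (phi n (x : Gg n).1 (c • bEps n (2*n-6)).2).2 = 0 := by simp [phi, hx2]
    have hp2 : (phi n (c • bEps n (2*n-6)).1 (x : Gg n).2).2 = 0 := by simp [phi, bEps]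
    rw [hh, hp1, hp2]; ring

/-- for `0 ≤ k ≤ n-5`, the 1-cochain `ε*_{n-3-k} ⊗ ε_{2n-6}` is closed:
`∂(ε*_{n-3-k} ⊗ ε_{2n-6}) = 0`. -/
theorem cobound_of_top_cochain_zero (n k : ℕ) (hn : 6 ≤ n) (hk : k ≤ n - 5) :
    cobound n k (cA n k) = fun _ _ => 0 := by
  funext x y
  have h1 := gBr_cA_zero n k hn hk x y
  have h2 := gBr_cA_zero n k hn hk y x
  have h3 : cA n k (mBrM n k x y) = 0 := by
    have hcoef : epsCoef n (n-3-k) ((mBrM n k x y : MT n k) : Gg n) = 0 := by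
      have hbr : (gBr n (x : Gg n) (y : Gg n)).2.1 ⟨n-3-k-1, by omega⟩ = 0 := by
        obtain ⟨hx0, hx1, hx2, hx3⟩ := x.2
        obtain ⟨hy0, hy1, hy2, hy3⟩ := y.2
        have hxe : (x : Gg n).2.1 ⟨n-3-k-1-1, by omega⟩ = 0 := hx3 _ (by push_cast; omega)
        have hye : (y : Gg n).2.1 ⟨n-3-k-1-1, by omega⟩ = 0 := hy3 _ (by push_cast; omega)
        show (phi n (x : Gg n).1 (y : Gg n).2).1 ⟨n-3-k-1, by omega⟩
            - (phi n (y : Gg n).1 (x : Gg n).2).1 ⟨n-3-k-1, by omega⟩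
            + (heisBr n (x : Gg n).2 (y : Gg n).2).1 ⟨n-3-k-1, by omega⟩ = 0
        have hpos : 0 < n-3-k-1 := by omega
        simp [phi, heisBr, hx0, hx1, hx2, hy0, hy1, hy2, hpos, hxe, hye]
      show epsCoef n (n-3-k) (Pm n k (gBr n (x : Gg n) (y : Gg n))) = 0
      rw [epsCoef, dif_pos (by omega : 1 ≤ n-3-k ∧ n-3-k ≤ 2*n-6)]
      show (if ((n:ℤ) - 3 - (k:ℤ) ≤ ((n-3-k-1 : ℕ):ℤ) + 1) then _ else 0) = 0
      split
      · exact hbr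
      · rfl
    show epsCoef n (n-3-k) ((mBrM n k x y : MT n k) : Gg n) • bEps n (2*n-6) = 0
    rw [hcoef, zero_smul]
  show gBr n (x : Gg n) (cA n k y) - gBr n (y : Gg n) (cA n k x) + cA n k (mBrM n k x y) = 0
  rw [h1, h2, h3]
  simp
end
end

section
/- For every integer k with 0 ≤ k ≤ n−5: the cochain X* ⊗ ε_{n−4−k} is homogeneous of weight 1 (hence lies in C¹₊(m,g)), and ∂(X* ⊗ ε_{n−4−k}) = (−1)^{n+k} · X* ∧ ε*_{n−1+k} ⊗ η, which is a nonzero element of C²(m,g). -/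
noncomputable section

open scoped BigOperators

lemma comp3_zero (n k : ℕ) (p : ℤ) (hp : p ≠ -1) {x : Gg n} (hx : x ∈ gComp n k p) :
    x.1 3 = 0 := by
  have hle : gComp n k p ≤
      LinearMap.ker ((LinearMap.proj (3 : Fin 4)).comp (LinearMap.fst ℝ G2 (Hs n))) := by
    rw [gComp, Submodule.span_le]
    rintro v hv
    simp only [Set.mem_setOf_eq] at hv
    simp only [SetLike.mem_coe, LinearMap.mem_ker, LinearMap.coe_comp, Function.comp_apply,
      LinearMap.fst_apply, LinearMap.proj_apply]
    rcases hv with ⟨rfl, _⟩ | ⟨h1, _⟩ | ⟨rfl, h⟩ | ⟨p', _, _, rfl, _⟩ | ⟨rfl, _⟩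
    · simp [bY]
    · rcases h1 with rfl | rfl
      · simp [bH]
      · simp [bE]
    · exact absurd h hp
    · simp [bEps]
    · simp [bEta]
  exact hle hx

lemma lin_cB (n k : ℕ) : IsLin1 n k (cB n k) := by
  constructor
  · intro x y
    simp [cB, Submodule.coe_add, Prod.fst_add, Pi.add_apply, add_smul]
  · intro c x
    simp [cB, Submodule.coe_smul, Prod.smul_fst, Pi.smul_apply, smul_smul]

lemma homog_cB (n k : ℕ) (hn : 6 ≤ n) (hk : k ≤ n - 5) : Homog1 n k 1 (cB n k) := by
  intro p hp x hx
  by_cases h : p = -1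
  · subst h
    have h0 : (-1 : ℤ) + 1 = 0 := by norm_num
    rw [h0]
    have hmem : bEps n (n-4-k) ∈ gComp n k 0 := by
      apply Submodule.subset_span
      exact Or.inr (Or.inr (Or.inr (Or.inl ⟨n-4-k, by omega, by omega, rfl, by omega⟩)))
    exact Submodule.smul_mem _ _ hmem
  · have h3 := comp3_zero n k p h hx
    have hz : cB n k x = 0 := by simp [cB, h3]
    rw [hz]
    exact Submodule.zero_mem _

lemma cB_mem_C1plus (n k : ℕ) (hn : 6 ≤ n) (hk : k ≤ n - 5) : cB n k ∈ C1plus n k :=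
  Submodule.subset_span ⟨lin_cB n k, 1, one_pos, homog_cB n k hn hk⟩

lemma epsCoef_eq (n k : ℕ) (hn : 6 ≤ n) (hk : k ≤ n-5) (z : Gg n) :
    epsCoef n (n-1+k) z = z.2.1 ⟨n-2+k, by omega⟩ := by
  rw [epsCoef, dif_pos ⟨by omega, by omega⟩]
  apply congrArg
  apply Fin.ext
  show n - 1 + k - 1 = n - 2 + k
  omega

lemma mBr3 (n k : ℕ) (x y : MT n k) : ((mBrM n k x y : Gg n)).1 3 = 0 := by
  obtain ⟨hx0, hx1, hx2, -⟩ := x.2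
  obtain ⟨hy0, hy1, hy2, -⟩ := y.2
  simp [mBrM, ptoM, Pm, gBr, gl2Br, hx1, hy1]

lemma cB_mBr (n k : ℕ) (x y : MT n k) : cB n k (mBrM n k x y) = 0 := by
  simp [cB, mBr3]

lemma cobound_eq (n k : ℕ) (hn : 6 ≤ n) (hk : k ≤ n - 5) :
    cobound n k (cB n k) = ((-1 : ℝ)^(n + k)) • cC n k := by
  funext x y
  obtain ⟨hx0, hx1, hx2, -⟩ := x.2
  obtain ⟨hy0, hy1, hy2, -⟩ := y.2
  have hB := cB_mBr n k x y
  have hB3 := mBr3 n k x y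
  have key : ∀ i : Fin (2*n-6), (i.rev.val + 1 = n-4-k) ↔ (i = ⟨n - 2 + k, by omega⟩) := by
    intro i
    have hlt := i.isLt
    rw [Fin.ext_iff, Fin.val_rev]
    simp only [Fin.val_mk]
    omega
  have hs : ((-1:ℝ))^(n-2+k+1) = -(-1:ℝ)^(n+k) := by
    have h' : n + k = (n-2+k+1) + 1 := by omega
    rw [h', pow_succ]
    ring
  refine Prod.ext ?_ (Prod.ext ?_ ?_)
  · funext i
    fin_cases i <;>
      simp [cobound, hB, cB, cC, gBr, gl2Br, bEps, bEta, etaV,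
        hx0, hx1, hx2, hy0, hy1, hy2, Pi.smul_apply]
  · funext i
    simp only [cobound, hB, cB, cC, gBr, gl2Br, phi, heisBr, bEps, epsV, bEta, etaV,
      Pi.smul_apply, Prod.smul_fst, Prod.smul_snd, Prod.fst_add, Prod.snd_add,
      Prod.fst_sub, Prod.snd_sub, Pi.add_apply, Pi.sub_apply, Pi.zero_apply,
      smul_eq_mul, mul_ite, mul_one, mul_zero, add_zero, zero_add, smul_zero,
      Prod.snd_zero, Prod.fst_zero, hx0, hx1, hx2, hy0, hy1, hy2, hB3]
    split_ifs <;> ring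
  · simp only [cobound, hB, cB, cC, gBr, gl2Br, phi, heisBr, bEps, epsV, bEta, etaV,
      Pi.smul_apply, Prod.smul_fst, Prod.smul_snd, Prod.fst_add, Prod.snd_add,
      Prod.fst_sub, Prod.snd_sub, Pi.add_apply, Pi.sub_apply, Pi.zero_apply,
      smul_eq_mul, mul_ite, mul_one, mul_zero, add_zero, zero_add, smul_zero,
      Prod.snd_zero, Prod.fst_zero, hx0, hx1, hx2, hy0, hy1, hy2,
      epsCoef_eq n k hn hk, key, Finset.sum_ite_eq', Finset.mem_univ, if_true, hs, hB3]
    ring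

lemma cC_ne (n k : ℕ) (hn : 6 ≤ n) (hk : k ≤ n-5) : cC n k ≠ 0 := by
  intro h
  have hxm : bX n ∈ mSub n k := by
    refine ⟨?_, ?_, ?_, fun i _ => rfl⟩ <;> simp [bX]
  have hym : bEps n (n-1+k) ∈ mSub n k := by
    refine ⟨rfl, rfl, rfl, fun i hi => ?_⟩
    show (if i.val + 1 = n-1+k then (1:ℝ) else 0) = 0
    rw [if_neg]
    omega
  have hev := congrFun (congrFun h ⟨bX n, hxm⟩) ⟨bEps n (n-1+k), hym⟩
  have h2 := congrArg (fun z : Gg n => z.2.2) hev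
  have hidx : n-2+k+1 = n-1+k := by omega
  simp [cC, bX, bEps, bEta, etaV, epsCoef_eq n k hn hk, epsV, hidx] at h2

/-- for `0 ≤ k ≤ n-5`, the cochain `X* ⊗ ε_{n-4-k}` is homogeneous of
weight 1 (hence lies in `C¹₊(m,g)`), and
`∂(X* ⊗ ε_{n-4-k}) = (-1)^{n+k} · X* ∧ ε*_{n-1+k} ⊗ η`, a nonzero element of `C²(m,g)`. -/
theorem cobound_of_weight_one_cochain (n k : ℕ) (hn : 6 ≤ n) (hk : k ≤ n - 5) :
    IsLin1 n k (cB n k) ∧ Homog1 n k 1 (cB n k) ∧ cB n k ∈ C1plus n k ∧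
    cobound n k (cB n k) = ((-1 : ℝ)^(n + k)) • cC n k ∧
    cC n k ≠ 0 := by
  exact ⟨lin_cB n k, homog_cB n k hn hk, cB_mem_C1plus n k hn hk,
    cobound_eq n k hn hk, cC_ne n k hn hk⟩
end
end
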